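/- arXiv:2605.15173 — 2 statements merged into one kernel-verified Lean document; each statement's English description precedes it below -/
import Mathlib

section
/- Let Y₁,…,Yₙ be independent and identically distributed geometric random variables with success probability p ∈ (0,1] and support {1,2,3,…}, and let Y = Y₁+⋯+Yₙ, so that E[Y] = n/p. Then for every real k ≥ 1, P[Y ≥ k·E[Y]] ≤ exp(−k·n·(1−1/k)²/2). -/
/-!
Chernoff's bound with `eᵗ = k / (k - p (k - 1))`, the value at which the mgf
`p eᵗ / (1 - (1 - p) eᵗ)` of each `Yᵢ` equals `k`, gives
`P[Y ≥ k n / p] ≤ (k e^{-t k / p})ⁿ`.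
The exponent is then bounded using `1 - 1 / x ≤ log x` for `t` and
`log k ≤ sinh (log k) = (k - 1 / k) / 2`.
-/

open MeasureTheory ProbabilityTheory Real

namespace MeasureTheory.Measure

variable {α : Type*} [MeasurableSpace α] [MeasurableSingletonClass α] [Countable α]

theorem ext_of_singleton_of_ne {ν ν' : Measure α} [IsFiniteMeasure ν]
    (huniv : ν .univ = ν' .univ) (a : α) (h : ∀ b ≠ a, ν {b} = ν' {b}) : ν = ν' := by
  have : IsFiniteMeasure ν' := ⟨huniv ▸ measure_lt_top ν .univ⟩
  have hrestrict : ν.restrict {a}ᶜ = ν'.restrict {a}ᶜ := ext_of_singleton fun b => by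
    rw [restrict_apply (measurableSet_singleton b), restrict_apply (measurableSet_singleton b)]
    by_cases hb : b = a
    · simp [hb]
    · rw [Set.inter_eq_left.2 (by simpa [eq_comm] using hb)]
      exact h b hb
  have hcompl : ν {a}ᶜ = ν' {a}ᶜ := by simpa using congrArg (· .univ) hrestrict
  refine ext_of_singleton fun b => ?_
  by_cases hb : b = a
  · have hmeas : MeasurableSet {a}ᶜ := (measurableSet_singleton a).compl
    rw [hb, ← compl_compl ({a} : Set α), measure_compl hmeas (measure_ne_top _ _),
      measure_compl hmeas (measure_ne_top _ _), hcompl, huniv]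
  · exact h b hb

end MeasureTheory.Measure

section ShiftedGeometric

variable {Ω : Type*} [MeasurableSpace Ω] {μ : Measure Ω} [IsProbabilityMeasure μ] {p : ℝ}
  {W : Ω → ℕ}

theorem map_eq_map_succ_geometricMeasure (hp0 : 0 < p) (hp1 : p ≤ 1) (hW : Measurable W)
    (hgeom : ∀ j : ℕ, 1 ≤ j → μ {ω | W ω = j} = ENNReal.ofReal ((1 - p) ^ (j - 1) * p)) :
    μ.map W = (geometricMeasure ⟨p, hp0.le, hp1⟩).map (· + 1) := by
  have : IsProbabilityMeasure (μ.map W) := Measure.isProbabilityMeasure_map hW.aemeasurable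
  have : IsProbabilityMeasure ((geometricMeasure ⟨p, hp0.le, hp1⟩).map (· + 1)) :=
    Measure.isProbabilityMeasure_map (measurable_add_const 1).aemeasurable
  refine Measure.ext_of_singleton_of_ne (by simp) 0 fun b hb => ?_
  obtain ⟨j, rfl⟩ := Nat.exists_eq_succ_of_ne_zero hb
  have hpre : (· + 1) ⁻¹' {j + 1} = ({j} : Set ℕ) := by ext; simp
  rw [Measure.map_apply hW (measurableSet_singleton _),
    Measure.map_apply (measurable_add_const 1) (measurableSet_singleton _), hpre,
    geometricMeasure_singleton (by simpa [← Subtype.coe_ne_coe] using hp0.ne')]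
  exact hgeom (j + 1) (by omega)

theorem geometric_weight_mul_exp_succ (p t : ℝ) (m : ℕ) :
    (1 - p) ^ m * p * exp (t * (m + 1 : ℕ)) = p * exp t * ((1 - p) * exp t) ^ m := by
  rw [Nat.cast_succ, mul_add_one, exp_add, mul_comm t, exp_nat_mul, mul_pow]
  ring

variable (hp0 : 0 < p) (hp1 : p ≤ 1) (hW : Measurable W)
  (hgeom : ∀ j : ℕ, 1 ≤ j → μ {ω | W ω = j} = ENNReal.ofReal ((1 - p) ^ (j - 1) * p))
include hp0 hp1 hW hgeom

theorem integrable_comp_iff_summable_geometric (f : ℕ → ℝ) :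
    Integrable (fun ω => f (W ω)) μ ↔
      Summable (fun m : ℕ => (1 - p) ^ m * p * ‖f (m + 1)‖) := by
  change Integrable (f ∘ W) μ ↔ _
  rw [← integrable_map_measure (.of_discrete) hW.aemeasurable,
    map_eq_map_succ_geometricMeasure hp0 hp1 hW hgeom,
    integrable_map_measure (.of_discrete) (measurable_add_const 1).aemeasurable,
    integrable_geometricMeasure_iff (by simpa [← Subtype.coe_ne_coe] using hp0.ne')]
  rfl

theorem integral_comp_eq_tsum_geometric (f : ℕ → ℝ) :
    ∫ ω, f (W ω) ∂μ = ∑' m : ℕ, (1 - p) ^ m * p * f (m + 1) := by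
  rw [← integral_map hW.aemeasurable (.of_discrete),
    map_eq_map_succ_geometricMeasure hp0 hp1 hW hgeom,
    integral_map (measurable_add_const 1).aemeasurable (.of_discrete),
    integral_geometricMeasure (by simpa [← Subtype.coe_ne_coe] using hp0.ne')]
  rfl

variable {t : ℝ} (ht : (1 - p) * exp t < 1)
include ht

theorem integrable_exp_mul_of_geometric : Integrable (fun ω => exp (t * W ω)) μ := by
  refine (integrable_comp_iff_summable_geometric hp0 hp1 hW hgeom (fun m => exp (t * m))).2 ?_
  simp_rw [norm_of_nonneg (exp_nonneg _), geometric_weight_mul_exp_succ]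
  exact (summable_geometric_of_lt_one (mul_nonneg (by linarith) (exp_pos t).le) ht).mul_left _

theorem mgf_of_geometric :
    mgf (fun ω => (W ω : ℝ)) μ t = p * exp t / (1 - (1 - p) * exp t) := by
  rw [mgf, integral_comp_eq_tsum_geometric hp0 hp1 hW hgeom (fun m => exp (t * m))]
  simp_rw [geometric_weight_mul_exp_succ]
  rw [tsum_mul_left, tsum_geometric_of_lt_one (mul_nonneg (by linarith) (exp_pos t).le) ht,
    div_eq_mul_inv]

end ShiftedGeometric

theorem measureReal_sum_ge_le_of_geometric {Ω ι : Type*} [MeasurableSpace Ω] {μ : Measure Ω}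
    [IsProbabilityMeasure μ] [Fintype ι] {p : ℝ} (hp0 : 0 < p) (hp1 : p ≤ 1)
    {Y : ι → Ω → ℕ} (hmeas : ∀ i, Measurable (Y i)) (hind : iIndepFun Y μ)
    (hgeom : ∀ i, ∀ j : ℕ, 1 ≤ j →
      μ {ω | Y i ω = j} = ENNReal.ofReal ((1 - p) ^ (j - 1) * p))
    {t : ℝ} (ht0 : 0 ≤ t) (ht : (1 - p) * exp t < 1) (a : ℝ) :
    μ.real {ω | a ≤ ∑ i, (Y i ω : ℝ)} ≤
      exp (-t * a) * (p * exp t / (1 - (1 - p) * exp t)) ^ Fintype.card ι := by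
  set X : ι → Ω → ℝ := fun i ω => Y i ω
  have hXmeas : ∀ i, Measurable (X i) := fun i => measurable_from_nat.comp (hmeas i)
  have hindX : iIndepFun X μ := hind.comp _ fun _ => measurable_from_nat
  have hsum : ∑ i, X i = fun ω => ∑ i, (Y i ω : ℝ) := by ext; simp [X]
  have hint : Integrable (fun ω => exp (t * (∑ i, X i) ω)) μ :=
    hindX.integrable_exp_mul_sum hXmeas fun i _ =>
      integrable_exp_mul_of_geometric hp0 hp1 (hmeas i) (hgeom i) ht
  have hchernoff := measure_ge_le_exp_mul_mgf a ht0 hint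
  rwa [hindX.mgf_sum hXmeas, Finset.prod_congr rfl fun i _ =>
    mgf_of_geometric hp0 hp1 (hmeas i) (hgeom i) ht, Finset.prod_const, Finset.card_univ,
    hsum] at hchernoff

theorem log_sub_div_mul_log_div_le {p k : ℝ} (hp0 : 0 < p) (hk : 1 ≤ k)
    (hD : 0 < k - p * (k - 1)) :
    log k - k / p * log (k / (k - p * (k - 1))) ≤ -(k * (1 - 1 / k) ^ 2) / 2 := by
  have hk0 : 0 < k := by linarith
  have hlog_div : k - 1 ≤ k / p * log (k / (k - p * (k - 1))) := by
    calc k - 1 = k / p * (1 - (k / (k - p * (k - 1)))⁻¹) := by field_simp; ring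
      _ ≤ k / p * log (k / (k - p * (k - 1))) :=
          mul_le_mul_of_nonneg_left (one_sub_inv_le_log_of_pos (by positivity)) (by positivity)
  have hlog_le_sinh : log k ≤ (k - k⁻¹) / 2 := by
    rw [← sinh_log hk0]
    exact self_le_sinh_iff.2 (log_nonneg hk)
  have hsq : -(k * (1 - 1 / k) ^ 2) / 2 = (k - k⁻¹) / 2 - (k - 1) := by
    field_simp
    ring
  linarith

theorem stmt1_general {Ω : Type*} [MeasurableSpace Ω] (μ : Measure Ω) [IsProbabilityMeasure μ]
    (n : ℕ) (p : ℝ) (hp0 : 0 < p) (hp1 : p ≤ 1)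
    (Y : Fin n → Ω → ℕ) (hmeas : ∀ i, Measurable (Y i))
    (hind : iIndepFun Y μ)
    (hgeom : ∀ i, ∀ j : ℕ, 1 ≤ j →
      μ {ω | Y i ω = j} = ENNReal.ofReal ((1 - p) ^ (j - 1) * p))
    (k : ℝ) (hk : 1 ≤ k) :
    μ {ω | k * (n / p) ≤ ∑ i, (Y i ω : ℝ)} ≤
      ENNReal.ofReal (Real.exp (-(k * n * (1 - 1 / k) ^ 2) / 2)) := by
  have hD : 0 < k - p * (k - 1) := by nlinarith
  set t := log (k / (k - p * (k - 1)))
  have hexp : exp t = k / (k - p * (k - 1)) := exp_log (by positivity)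
  have ht0 : 0 ≤ t := log_nonneg ((one_le_div hD).2 (by nlinarith))
  have ht : (1 - p) * exp t < 1 := by
    rw [hexp, ← mul_div_assoc, div_lt_one hD]
    linarith
  have hmgf : p * exp t / (1 - (1 - p) * exp t) = k := by
    rw [hexp, show 1 - (1 - p) * (k / (k - p * (k - 1))) = p / (k - p * (k - 1)) by
      field_simp; ring]
    field_simp
  have hchernoff :=
    measureReal_sum_ge_le_of_geometric hp0 hp1 hmeas hind hgeom ht0 ht (k * (n / p))
  rw [hmgf, Fintype.card_fin] at hchernoff
  calc μ {ω | k * (n / p) ≤ ∑ i, (Y i ω : ℝ)}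
      = ENNReal.ofReal (μ.real {ω | k * (n / p) ≤ ∑ i, (Y i ω : ℝ)}) :=
        (ofReal_measureReal).symm
    _ ≤ ENNReal.ofReal (exp (n * (log k - k / p * t))) := by
      refine ENNReal.ofReal_le_ofReal (hchernoff.trans_eq ?_)
      rw [← exp_log (pow_pos (by linarith : 0 < k) n), ← exp_add, log_pow]
      ring_nf
    _ ≤ ENNReal.ofReal (exp (-(k * n * (1 - 1 / k) ^ 2) / 2)) := by
      refine ENNReal.ofReal_le_ofReal (exp_le_exp.2 ?_)
      have := mul_le_mul_of_nonneg_left (log_sub_div_mul_log_div_le hp0 hk hD) n.cast_nonneg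
      linarith

/-- Tail bound for a sum of `n` i.i.d. geometric random variables with success
probability `p` and support `{1,2,3,…}` (so `E[Y] = n/p`): for every `k ≥ 1`,
`P[Y ≥ k·E[Y]] ≤ exp(−k·n·(1−1/k)²/2)`. -/
theorem stmt1 {Ω : Type*} [MeasurableSpace Ω] (μ : Measure Ω) [IsProbabilityMeasure μ]
    (n : ℕ) (hn : 1 ≤ n) (p : ℝ) (hp0 : 0 < p) (hp1 : p ≤ 1)
    (Y : Fin n → Ω → ℕ) (hmeas : ∀ i, Measurable (Y i))
    (hind : iIndepFun Y μ)
    (hgeom : ∀ i, ∀ j : ℕ, 1 ≤ j →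
      μ {ω | Y i ω = j} = ENNReal.ofReal ((1 - p) ^ (j - 1) * p))
    (k : ℝ) (hk : 1 ≤ k) :
    μ {ω | k * (n / p) ≤ ∑ i, (Y i ω : ℝ)} ≤
      ENNReal.ofReal (Real.exp (-(k * n * (1 - 1 / k) ^ 2) / 2)) :=
  stmt1_general μ n p hp0 hp1 Y hmeas hind hgeom k hk
end

section
/- Let V and E be positive reals with E ≥ V, let ℓ ∈ ℕ, let N be a positive integer with N ≤ (5/6)^ℓ · V, and let d₁,…,d_N be positive reals with ∑_{i=1}^{N} dᵢ ≤ 2E. Then ∑_{i=1}^{N} log₂ dᵢ ≤ (5/6)^ℓ · (1.07 + ℓ·log₂(6/5)) · V · log₂(2E/V). -/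
/-!
By concavity of `log`, `∑ log dᵢ ≤ N log (2E / N)`, and `x ↦ x log (A / x)` increases up to
`x = A / e`, where it attains its maximum `A / e`. If `c V ≤ 2E / e` with `c = (5/6)^ℓ`, evaluating
at `x = c V` gives `c V (log (2E/V) + ℓ log (6/5))`, and `log (2E/V) ≥ log 2` absorbs the second
term into the `ℓ log₂ (6/5)` part of the factor. Otherwise the bound `2E / e` must be compared
with the right-hand side for `log (2E/V)` between `log 2` and `1 + log c`; this interval is empty
unless `ℓ ≤ 1`, and by convexity of `exp` it suffices to check its two endpoints. The constant
`1.07` is what the endpoint `ℓ = 0`, `log (2E/V) = log 2` needs: `2 ≤ 1.07 · e · log 2`.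
-/

open Real Finset

namespace Real

theorem sum_log_le_card_mul_log_div {ι : Type*} (s : Finset ι) {d : ι → ℝ} {A : ℝ}
    (hd : ∀ i ∈ s, 0 < d i) (hsum : ∑ i ∈ s, d i ≤ A) :
    ∑ i ∈ s, log (d i) ≤ #s * log (A / #s) := by
  rcases s.eq_empty_or_nonempty with rfl | hs
  · simp
  have hn : (0 : ℝ) < #s := by exact_mod_cast hs.card_pos
  have jensen := strictConcaveOn_log_Ioi.concaveOn.le_map_sum (t := s) (w := fun _ ↦ (#s : ℝ)⁻¹)
    (p := d) (fun _ _ ↦ by positivity) (by simp [hn.ne']) (fun i hi ↦ hd i hi)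
  simp only [smul_eq_mul, inv_mul_eq_div, ← sum_div] at jensen
  calc ∑ i ∈ s, log (d i) ≤ #s * log ((∑ i ∈ s, d i) / #s) := by
        rwa [← div_le_iff₀' hn]
    _ ≤ #s * log (A / #s) := by
        gcongr
        exact div_pos (sum_pos hd hs) hn

theorem mul_log_div_le_div_exp_one {x A : ℝ} (hx : 0 < x) (hA : 0 < A) :
    x * log (A / x) ≤ A / exp 1 := by
  have h := exp_one_mul_le_exp (x := log (A / x))
  rw [exp_log (by positivity)] at h
  rw [le_div_iff₀ (exp_pos 1)]
  calc x * log (A / x) * exp 1 = exp 1 * log (A / x) * x := by ring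
    _ ≤ A / x * x := by gcongr
    _ = A := div_mul_cancel₀ A hx.ne'

theorem mul_log_div_le_mul_log_div {x M A : ℝ} (hx : 0 < x) (hxM : x ≤ M)
    (hMA : exp 1 * M ≤ A) : x * log (A / x) ≤ M * log (A / M) := by
  have hM : 0 < M := hx.trans_le hxM
  have hA : 0 < A := by nlinarith [exp_pos 1]
  have hlogM : 1 ≤ log (A / M) := by
    rw [le_log_iff_exp_le (by positivity), le_div_iff₀ hM]; exact hMA
  have hlog_le : x * log (M / x) ≤ M - x := by
    have h := log_le_sub_one_of_pos (div_pos hM hx)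
    calc x * log (M / x) ≤ x * (M / x - 1) := by gcongr
      _ = M - x := by field_simp
  have hsplit : log (A / x) = log (A / M) + log (M / x) := by
    rw [← log_mul (by positivity) (by positivity), div_mul_div_cancel₀ hM.ne']
  rw [hsplit]
  nlinarith

theorem exp_le_mul_of_mem_Icc {k a b u : ℝ} (ha : exp a ≤ k * a) (hb : exp b ≤ k * b)
    (hu : u ∈ Set.Icc a b) : exp u ≤ k * u := by
  have hconv : ConvexOn ℝ Set.univ (fun t ↦ exp t - k * t) :=
    convexOn_exp.sub ((LinearMap.mulLeft ℝ k).concaveOn convex_univ)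
  have := hconv.le_on_segment (Set.mem_univ a) (Set.mem_univ b)
    (by rwa [segment_eq_Icc (hu.1.trans hu.2)])
  linarith [max_le (sub_nonpos.2 ha) (sub_nonpos.2 hb)]

end Real

noncomputable def levelCoeff (ℓ : ℕ) : ℝ := (5 / 6) ^ ℓ * (1.07 + ℓ * logb 2 (6 / 5))

theorem log_six_fifths_mem_Icc : log (6 / 5) ∈ Set.Icc (1 / 6 : ℝ) (1 / 5) := by
  have h₁ := log_le_sub_one_of_pos (show (0 : ℝ) < 5 / 6 by norm_num)
  have h₂ := log_le_sub_one_of_pos (show (0 : ℝ) < 6 / 5 by norm_num)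
  rw [show (5 / 6 : ℝ) = (6 / 5)⁻¹ by norm_num, log_inv] at h₁
  constructor <;> linarith

theorem log_five_sixths_pow (ℓ : ℕ) : log ((5 / 6 : ℝ) ^ ℓ) = -(ℓ * log (6 / 5)) := by
  rw [log_pow, show (5 / 6 : ℝ) = (6 / 5)⁻¹ by norm_num, log_inv, mul_neg]

theorem logb_two_six_fifths_mul_log_two : logb 2 (6 / 5) * log 2 = log (6 / 5) :=
  div_mul_cancel₀ _ (log_pos one_lt_two).ne'

theorem levelCoeff_pos (ℓ : ℕ) : 0 < levelCoeff ℓ := by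
  have : 0 ≤ logb 2 (6 / 5) := logb_nonneg one_lt_two (by norm_num)
  unfold levelCoeff; positivity

theorem sub_log_five_sixths_pow_le {ℓ : ℕ} {u : ℝ} (hu : log 2 ≤ u) :
    u - log ((5 / 6 : ℝ) ^ ℓ) ≤ (1.07 + ℓ * logb 2 (6 / 5)) * u := by
  have hβ : 0 ≤ ℓ * logb 2 (6 / 5) :=
    mul_nonneg ℓ.cast_nonneg (logb_nonneg one_lt_two (by norm_num))
  have hu₀ : 0 ≤ u := (log_pos one_lt_two).le.trans hu
  rw [log_five_sixths_pow, ← logb_two_six_fifths_mul_log_two]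
  nlinarith

theorem exp_le_exp_one_mul_levelCoeff_mul {ℓ : ℕ} {u : ℝ} (hu : log 2 ≤ u)
    (hu' : u ≤ 1 + log ((5 / 6 : ℝ) ^ ℓ)) : exp u ≤ exp 1 * levelCoeff ℓ * u := by
  obtain ⟨hμ₁, hμ₂⟩ := log_six_fifths_mem_Icc
  have hL₁ := log_two_gt_d9
  have hL₂ := log_two_lt_d9
  have he := exp_one_gt_d9
  have hβ : logb 2 (6 / 5) * log 2 = log (6 / 5) := logb_two_six_fifths_mul_log_two
  have hβ₀ : 0.24 ≤ logb 2 (6 / 5) := by nlinarith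
  have hℓ : ℓ ≤ 1 := by
    have hℓμ := hu.trans hu'
    rw [log_five_sixths_pow] at hℓμ
    have : (ℓ : ℝ) < 2 := by nlinarith
    exact Nat.lt_succ_iff.mp (by exact_mod_cast this)
  refine exp_le_mul_of_mem_Icc ?_ ?_ ⟨hu, hu'⟩
  · rw [exp_log two_pos]
    unfold levelCoeff
    interval_cases ℓ
    · norm_num; nlinarith
    · norm_num; nlinarith
  · have hK : 1 ≤ (1.07 + ℓ * logb 2 (6 / 5)) * (1 + log ((5 / 6 : ℝ) ^ ℓ)) := by
      rw [log_five_sixths_pow]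
      interval_cases ℓ
      · norm_num
      · norm_num; nlinarith
    calc exp (1 + log ((5 / 6 : ℝ) ^ ℓ)) = exp 1 * (5 / 6) ^ ℓ * 1 := by
          rw [exp_add, exp_log (by positivity), mul_one]
      _ ≤ exp 1 * (5 / 6) ^ ℓ * ((1.07 + ℓ * logb 2 (6 / 5)) * (1 + log ((5 / 6 : ℝ) ^ ℓ))) := by
          gcongr
      _ = exp 1 * levelCoeff ℓ * (1 + log ((5 / 6 : ℝ) ^ ℓ)) := by
          unfold levelCoeff; ring

theorem mul_log_div_le_levelCoeff {V E x : ℝ} {ℓ : ℕ} (hV : 0 < V) (hE : V ≤ E) (hx : 0 ≤ x)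
    (hxV : x ≤ (5 / 6) ^ ℓ * V) : x * log (2 * E / x) ≤ levelCoeff ℓ * V * log (2 * E / V) := by
  have hE₀ : 0 < E := hV.trans_le hE
  have hu : log 2 ≤ log (2 * E / V) := log_le_log two_pos (by rw [le_div_iff₀ hV]; linarith)
  rcases hx.eq_or_lt with rfl | hx
  · have := levelCoeff_pos ℓ
    have := (log_pos one_lt_two).trans_le hu
    rw [zero_mul]; positivity
  have hc : (0 : ℝ) < (5 / 6) ^ ℓ := by positivity
  rcases le_or_gt (exp 1 * ((5 / 6) ^ ℓ * V)) (2 * E) with hsmall | hlarge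
  · calc x * log (2 * E / x) ≤ (5 / 6) ^ ℓ * V * log (2 * E / ((5 / 6) ^ ℓ * V)) :=
          mul_log_div_le_mul_log_div hx hxV hsmall
      _ = (5 / 6) ^ ℓ * V * (log (2 * E / V) - log ((5 / 6) ^ ℓ)) := by
          rw [mul_comm _ V, ← div_div, log_div (by positivity) hc.ne']
      _ ≤ (5 / 6) ^ ℓ * V * ((1.07 + ℓ * logb 2 (6 / 5)) * log (2 * E / V)) := by
          gcongr; exact sub_log_five_sixths_pow_le hu
      _ = levelCoeff ℓ * V * log (2 * E / V) := by unfold levelCoeff; ring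
  · have hu' : log (2 * E / V) ≤ 1 + log ((5 / 6) ^ ℓ) := by
      rw [← log_exp 1, ← log_mul (exp_pos 1).ne' hc.ne']
      exact log_le_log (by positivity) (by rw [div_le_iff₀ hV]; linarith)
    calc x * log (2 * E / x) ≤ 2 * E / exp 1 := mul_log_div_le_div_exp_one hx (by linarith)
      _ = V * exp (log (2 * E / V)) / exp 1 := by
          rw [exp_log (by positivity), mul_div_cancel₀ _ hV.ne']
      _ ≤ V * (exp 1 * levelCoeff ℓ * log (2 * E / V)) / exp 1 := by
          gcongr; exact exp_le_exp_one_mul_levelCoeff_mul hu hu'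
      _ = levelCoeff ℓ * V * log (2 * E / V) := by field_simp

theorem stmt13_general (V E : ℝ) (hV : 0 < V) (hE : V ≤ E) (ℓ : ℕ)
    (N : ℕ) (hNle : (N : ℝ) ≤ (5 / 6) ^ ℓ * V)
    (d : Fin N → ℝ) (hd : ∀ i, 0 < d i) (hsum : ∑ i, d i ≤ 2 * E) :
    ∑ i, Real.logb 2 (d i) ≤
      (5 / 6) ^ ℓ * (1.07 + (ℓ : ℝ) * Real.logb 2 (6 / 5)) * V * Real.logb 2 (2 * E / V) := by
  have hjensen := sum_log_le_card_mul_log_div univ (fun i _ ↦ hd i) hsum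
  rw [card_univ, Fintype.card_fin] at hjensen
  have hlevel := mul_log_div_le_levelCoeff hV hE N.cast_nonneg hNle
  calc ∑ i, logb 2 (d i) = (∑ i, log (d i)) / log 2 := by simp only [logb, sum_div]
    _ ≤ levelCoeff ℓ * V * log (2 * E / V) / log 2 := by
        gcongr; exact hjensen.trans hlevel
    _ = levelCoeff ℓ * V * logb 2 (2 * E / V) := mul_div_assoc _ _ _

/-- Per-level depth bound: if `N ≤ (5/6)^ℓ·V` clusters have cut sizes `dᵢ > 0` summing to at
most `2E` (with `E ≥ V > 0`), then
`∑ log₂ dᵢ ≤ (5/6)^ℓ·(1.07 + ℓ·log₂(6/5))·V·log₂(2E/V)`. -/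
theorem stmt13 (V E : ℝ) (hV : 0 < V) (hE : V ≤ E) (ℓ : ℕ)
    (N : ℕ) (hN : 0 < N) (hNle : (N : ℝ) ≤ (5 / 6) ^ ℓ * V)
    (d : Fin N → ℝ) (hd : ∀ i, 0 < d i) (hsum : ∑ i, d i ≤ 2 * E) :
    ∑ i, Real.logb 2 (d i) ≤
      (5 / 6) ^ ℓ * (1.07 + (ℓ : ℝ) * Real.logb 2 (6 / 5)) * V * Real.logb 2 (2 * E / V) :=
  stmt13_general V E hV hE ℓ N hNle d hd hsum
end
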